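/- arXiv:1603.07361 — 9 statements merged into one kernel-verified Lean document; each statement's English description precedes it below -/
import Mathlib

section
/- Let B > 0 and let I ⊆ ℝ be an interval. Let (U, φ) and (V, ω) be two solutions of the capillary ODE system with parameter B on I. If there is a point p ∈ I with φ(p) = ω(p) and U(p) > V(p), then U(q) > V(q) for every q ∈ I; in particular the two solution curves cannot intersect on I. (Lemma 1 of the paper.) -/
/-!
With `W = U - V` and `S = sin φ - sin ω` the system gives `S' = B W` and `W' = tan φ - tan ω`,
and `tan φ - tan ω` has the sign of `S` because `sin` and `tan` both increase on `(-π/2, π/2)`.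
Hence `(W S)' = B W² + (tan φ - tan ω) S ≥ 0`, and since `S p = 0` the product `W S` is `≥ 0`
to the right of `p` and `≤ 0` to the left. Then `(W²)' = 2 W (tan φ - tan ω)` has the same sign,
so `W²` grows away from `p` and `W` never vanishes on `I`; by the intermediate value theorem it
keeps the sign of `W p > 0`.
-/

open Real Set

/-- A solution of the (normalized) capillary ODE system with parameter `B` on a set `I ⊆ ℝ`:
a pair of functions `U ψ : ℝ → ℝ` such that `ψ ξ ∈ (−π/2, π/2)` for all `ξ ∈ I`, and for
every `ξ ∈ I` the function `sin ∘ ψ` has derivative `B * U ξ` at `ξ` and `U` has derivative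
`tan (ψ ξ)` at `ξ`. -/
def IsCapillarySol (B : ℝ) (I : Set ℝ) (U ψ : ℝ → ℝ) : Prop :=
  ∀ ξ ∈ I, ψ ξ ∈ Set.Ioo (-(π / 2)) (π / 2) ∧
    HasDerivAt (fun t => Real.sin (ψ t)) (B * U ξ) ξ ∧
    HasDerivAt U (Real.tan (ψ ξ)) ξ

theorem StrictMonoOn.mul_sub_nonneg_of_mul_sub_nonneg {α : Type*} [LinearOrder α]
    {f g : α → ℝ} {s : Set α} (hf : StrictMonoOn f s) (hg : MonotoneOn g s)
    {x y : α} (hx : x ∈ s) (hy : y ∈ s) {a : ℝ} (h : 0 ≤ a * (f x - f y)) :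
    0 ≤ a * (g x - g y) := by
  rcases lt_trichotomy a 0 with ha | rfl | ha
  · have hfxy : f x ≤ f y := by nlinarith
    exact mul_nonneg_of_nonpos_of_nonpos ha.le
      (sub_nonpos.2 (hg hx hy ((hf.le_iff_le hx hy).1 hfxy)))
  · simp
  · have hfyx : f y ≤ f x := by nlinarith
    exact mul_nonneg ha.le (sub_nonneg.2 (hg hy hx ((hf.le_iff_le hy hx).1 hfyx)))

theorem Real.mul_tan_sub_nonneg_of_mul_sin_sub_nonneg {x y a : ℝ}
    (hx : x ∈ Ioo (-(π / 2)) (π / 2)) (hy : y ∈ Ioo (-(π / 2)) (π / 2))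
    (h : 0 ≤ a * (sin x - sin y)) : 0 ≤ a * (tan x - tan y) :=
  (strictMonoOn_sin.mono Ioo_subset_Icc_self).mul_sub_nonneg_of_mul_sub_nonneg
    strictMonoOn_tan.monotoneOn hx hy h

theorem monotoneOn_of_hasDerivAt_nonneg {f f' : ℝ → ℝ} {D : Set ℝ} (hD : Convex ℝ D)
    (hf : ∀ x ∈ D, HasDerivAt f (f' x) x) (hf' : ∀ x ∈ interior D, 0 ≤ f' x) :
    MonotoneOn f D :=
  monotoneOn_of_deriv_nonneg hD (fun x hx => (hf x hx).continuousAt.continuousWithinAt)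
    (fun x hx => (hf x (interior_subset hx)).differentiableAt.differentiableWithinAt)
    fun x hx => (hf x (interior_subset hx)).deriv ▸ hf' x hx

theorem antitoneOn_of_hasDerivAt_nonpos {f f' : ℝ → ℝ} {D : Set ℝ} (hD : Convex ℝ D)
    (hf : ∀ x ∈ D, HasDerivAt f (f' x) x) (hf' : ∀ x ∈ interior D, f' x ≤ 0) :
    AntitoneOn f D :=
  antitoneOn_of_deriv_nonpos hD (fun x hx => (hf x hx).continuousAt.continuousWithinAt)
    (fun x hx => (hf x (interior_subset hx)).differentiableAt.differentiableWithinAt)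
    fun x hx => (hf x (interior_subset hx)).deriv ▸ hf' x hx

namespace IsCapillarySol

variable {B : ℝ} {I : Set ℝ} {U φ V ω : ℝ → ℝ}

theorem monotoneOn_sub_mul_sin_sub (hB : 0 ≤ B) (hI : I.OrdConnected)
    (hU : IsCapillarySol B I U φ) (hV : IsCapillarySol B I V ω) :
    MonotoneOn (fun t => (U t - V t) * (sin (φ t) - sin (ω t))) I := by
  refine monotoneOn_of_hasDerivAt_nonneg hI.convex (fun t ht =>
    ((((hU t ht).2.2.sub (hV t ht).2.2).mul ((hU t ht).2.1.sub (hV t ht).2.1))).congr_deriv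
      (show _ = (sin (φ t) - sin (ω t)) * (tan (φ t) - tan (ω t)) + B * (U t - V t) ^ 2 by
        simp only [Pi.sub_apply]; ring))
    fun t ht => ?_
  have ht := interior_subset ht
  exact add_nonneg (mul_tan_sub_nonneg_of_mul_sin_sub_nonneg (hU t ht).1 (hV t ht).1
    (mul_self_nonneg _)) (by positivity)

theorem sq_sub_le_sq_sub (hB : 0 ≤ B) (hI : I.OrdConnected)
    (hU : IsCapillarySol B I U φ) (hV : IsCapillarySol B I V ω) {p q : ℝ} (hp : p ∈ I)
    (hincl : φ p = ω p) (hq : q ∈ I) : (U p - V p) ^ 2 ≤ (U q - V q) ^ 2 := by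
  have hG := monotoneOn_sub_mul_sin_sub hB hI hU hV
  have hGp : (U p - V p) * (sin (φ p) - sin (ω p)) = 0 := by rw [hincl, sub_self, mul_zero]
  have hsq : ∀ t ∈ I, HasDerivAt (fun t => (U t - V t) ^ 2)
      (2 * ((U t - V t) * (tan (φ t) - tan (ω t)))) t := fun t ht =>
    (((hU t ht).2.2.sub (hV t ht).2.2).pow 2).congr_deriv (by simp only [Pi.sub_apply]; ring)
  rcases le_total p q with hpq | hqp
  · refine monotoneOn_of_hasDerivAt_nonneg (hI.convex.inter (convex_Ici p))
      (fun t ht => hsq t ht.1) (fun t ht => ?_) ⟨hp, self_mem_Ici⟩ ⟨hq, hpq⟩ hpq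
    obtain ⟨htI, hpt⟩ := interior_subset ht
    have hGt : 0 ≤ (U t - V t) * (sin (φ t) - sin (ω t)) := hGp ▸ hG hp htI hpt
    linarith [mul_tan_sub_nonneg_of_mul_sin_sub_nonneg (hU t htI).1 (hV t htI).1 hGt]
  · refine antitoneOn_of_hasDerivAt_nonpos (hI.convex.inter (convex_Iic p))
      (fun t ht => hsq t ht.1) (fun t ht => ?_) ⟨hq, hqp⟩ ⟨hp, self_mem_Iic⟩ hqp
    obtain ⟨htI, htp⟩ := interior_subset ht
    have hGt : (U t - V t) * (sin (φ t) - sin (ω t)) ≤ 0 := hGp ▸ hG htI hp htp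
    linarith [mul_tan_sub_nonneg_of_mul_sin_sub_nonneg (hU t htI).1 (hV t htI).1
      (show 0 ≤ -(U t - V t) * (sin (φ t) - sin (ω t)) by linarith)]

end IsCapillarySol

/-- Lemma 1: two distinct solution curves of the capillary system with the same inclination
at a common point, one strictly above the other there, cannot intersect on their common
interval of definition. -/
theorem capillary_no_intersection
    (B : ℝ) (hB : 0 < B) (I : Set ℝ) (hI : I.OrdConnected)
    (U φ V ω : ℝ → ℝ)
    (hUφ : IsCapillarySol B I U φ) (hVω : IsCapillarySol B I V ω)
    (p : ℝ) (hp : p ∈ I) (hincl : φ p = ω p) (hUp : U p > V p) :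
    ∀ q ∈ I, U q > V q := by
  intro q hq
  have hne : ∀ t ∈ I, U t - V t ≠ 0 := fun t ht h0 => by
    have := hUφ.sq_sub_le_sq_sub hB.le hI hVω hp hincl ht
    rw [h0] at this
    nlinarith
  have hW : ContinuousOn (fun t => U t - V t) I := fun t ht =>
    ((hUφ t ht).2.2.sub (hVω t ht).2.2).continuousAt.continuousWithinAt
  by_contra hle
  obtain ⟨r, hr, hr0⟩ := hI.isPreconnected.intermediate_value hq hp hW
    (show (0 : ℝ) ∈ Icc (U q - V q) (U p - V p) from ⟨by linarith, by linarith⟩)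
  exact hne r hr hr0
end

section
/- Let B > 0, let I ⊆ ℝ be an interval, and let (U, ψ) be a solution of the capillary ODE system with parameter B on I. Then the function ξ ↦ (B/2)·U(ξ)² + cos(ψ(ξ)) is constant on I. (The first integral, equation (11) of the paper.) -/
/-!
Along a solution, `(B/2)·U² + cos ψ` has derivative `B·U·tan ψ - tan ψ·(B·U) = 0`, since
`(cos ψ)' = -tan ψ·(sin ψ)'` while `|ψ| < π/2`; a function with vanishing derivative on an
interval is constant there.
-/

open Real Set

theorem Convex.eq_of_hasDerivWithinAt_zero {E : Type*} [NormedAddCommGroup E] [NormedSpace ℝ E]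
    {s : Set ℝ} {f : ℝ → E} (hs : Convex ℝ s) (hf : ∀ x ∈ s, HasDerivWithinAt f 0 s x)
    {x y : ℝ} (hx : x ∈ s) (hy : y ∈ s) : f x = f y := by
  have hlip := hs.norm_image_sub_le_of_norm_hasDerivWithin_le (C := 0) hf (by simp) hx hy
  rw [zero_mul, norm_le_zero_iff, sub_eq_zero] at hlip
  exact hlip.symm

theorem hasDerivAt_sqrt_one_sub_sin_sq {ψ : ℝ → ℝ} {s' x : ℝ}
    (hψ : HasDerivAt (fun t => sin (ψ t)) s' x) (hx : ψ x ∈ Ioo (-(π / 2)) (π / 2)) :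
    HasDerivAt (fun t => √(1 - sin (ψ t) ^ 2)) (-(tan (ψ x) * s')) x := by
  have hcos : cos (ψ x) = √(1 - sin (ψ x) ^ 2) := cos_eq_sqrt_one_sub_sin_sq hx.1.le hx.2.le
  have hpos : 0 < cos (ψ x) := cos_pos_of_mem_Ioo hx
  have hne : 1 - sin (ψ x) ^ 2 ≠ 0 := by
    rw [← cos_sq']
    exact pow_ne_zero 2 hpos.ne'
  refine (((hψ.fun_pow 2).const_sub 1).sqrt hne).congr_deriv ?_
  rw [← hcos, tan_eq_sin_div_cos]
  field_simp
  push_cast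
  ring

/-- The first integral, with `cos ψ` written as `√(1 - sin² ψ)` so that it is differentiable
whenever `sin ∘ ψ` is. -/
noncomputable def capillaryEnergy (B : ℝ) (U ψ : ℝ → ℝ) (t : ℝ) : ℝ :=
  B / 2 * U t ^ 2 + √(1 - sin (ψ t) ^ 2)

namespace IsCapillarySol

variable {B : ℝ} {I : Set ℝ} {U ψ : ℝ → ℝ} {ξ : ℝ}

theorem capillaryEnergy_eq (h : IsCapillarySol B I U ψ) (hξ : ξ ∈ I) :
    capillaryEnergy B U ψ ξ = B / 2 * U ξ ^ 2 + cos (ψ ξ) := by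
  have hψ := (h ξ hξ).1
  rw [capillaryEnergy, cos_eq_sqrt_one_sub_sin_sq hψ.1.le hψ.2.le]

theorem hasDerivAt_capillaryEnergy (h : IsCapillarySol B I U ψ) (hξ : ξ ∈ I) :
    HasDerivAt (capillaryEnergy B U ψ) 0 ξ := by
  obtain ⟨hψ, hsin, hU⟩ := h ξ hξ
  refine (((hU.fun_pow 2).const_mul (B / 2)).fun_add
    (hasDerivAt_sqrt_one_sub_sin_sq hsin hψ)).congr_deriv ?_
  push_cast
  ring

end IsCapillarySol

theorem capillary_first_integral_general
    (B : ℝ) (I : Set ℝ) (hI : I.OrdConnected)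
    (U ψ : ℝ → ℝ) (h : IsCapillarySol B I U ψ) :
    ∀ ξ₁ ∈ I, ∀ ξ₂ ∈ I,
      B / 2 * U ξ₁ ^ 2 + Real.cos (ψ ξ₁) = B / 2 * U ξ₂ ^ 2 + Real.cos (ψ ξ₂) := by
  intro ξ₁ h₁ ξ₂ h₂
  rw [← h.capillaryEnergy_eq h₁, ← h.capillaryEnergy_eq h₂]
  exact hI.convex.eq_of_hasDerivWithinAt_zero
    (fun ξ hξ => (h.hasDerivAt_capillaryEnergy hξ).hasDerivWithinAt) h₁ h₂

/-- Equation (11): the first integral `(B/2)·U² + cos ψ` is constant on any solution curve. -/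
theorem capillary_first_integral
    (B : ℝ) (hB : 0 < B) (I : Set ℝ) (hI : I.OrdConnected)
    (U ψ : ℝ → ℝ) (h : IsCapillarySol B I U ψ) :
    ∀ ξ₁ ∈ I, ∀ ξ₂ ∈ I,
      B / 2 * U ξ₁ ^ 2 + Real.cos (ψ ξ₁) = B / 2 * U ξ₂ ^ 2 + Real.cos (ψ ξ₂) :=
  capillary_first_integral_general B I hI U ψ h
end

section
/- Let B > 0, let I ⊆ ℝ be an interval, and let (U, ψ) be a solution of the capillary ODE system with parameter B on I. Suppose ξ₀ ∈ I is a point where the curve crosses the axis, U(ξ₀) = 0, with crossing inclination ψ₀ = ψ(ξ₀), and let ξ₁ ∈ I be a point of height η = U(ξ₁) with inclination ψ_η = ψ(ξ₁). Then 2·(1 − cos ψ₀) ≤ 2·(1 − cos ψ_η), with equality if and only if η = 0. In terms of the normalized force 𝓕 = −2(1 − cos ψ₀) exerted between two repelling plates, this says |𝓕| ≤ 2(1 − cos ψ_η), with equality exactly when the reference point lies on the axis. (Lemma 2 of the paper.) -/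
open Real Set

/-!
The quantity `cos ψ + (B/2) U²` is a first integral of the capillary system: along a solution
`(cos ψ)' = -tan ψ · (sin ψ)' = -B U tan ψ = -(B/2) (U²)'`. Comparing its values at the axis
crossing `ξ₀` and at `ξ₁` gives `cos ψ₀ = cos ψ_η + (B/2) η²`, whence both claims since `B > 0`.
-/

theorem hasDerivWithinAt_cos_of_sin {f : ℝ → ℝ} {s : Set ℝ} {x d : ℝ}
    (hf : ∀ t ∈ s, f t ∈ Ioo (-(π / 2)) (π / 2)) (hx : x ∈ s)
    (hd : HasDerivWithinAt (fun t => sin (f t)) d s x) :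
    HasDerivWithinAt (fun t => cos (f t)) (-tan (f x) * d) s x := by
  have hcos : ∀ t ∈ s, cos (f t) = √(1 - sin (f t) ^ 2) := fun t ht =>
    cos_eq_sqrt_one_sub_sin_sq (hf t ht).1.le (hf t ht).2.le
  have hpos : 0 < cos (f x) := cos_pos_of_mem_Ioo (hf x hx)
  have hsq : 1 - sin (f x) ^ 2 ≠ 0 := by
    rw [← cos_sq']
    exact pow_ne_zero 2 hpos.ne'
  refine (((hd.fun_pow 2).const_sub 1).sqrt hsq).congr_of_mem hcos hx |>.congr_deriv ?_
  rw [← hcos x hx, tan_eq_sin_div_cos]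
  field_simp
  ring

namespace IsCapillarySol

variable {B : ℝ} {I : Set ℝ} {U ψ : ℝ → ℝ}

theorem hasDerivWithinAt_energy (h : IsCapillarySol B I U ψ) {ξ : ℝ} (hξ : ξ ∈ I) :
    HasDerivWithinAt (fun t => cos (ψ t) + B / 2 * U t ^ 2) 0 I ξ := by
  obtain ⟨-, hsin, hU⟩ := h ξ hξ
  have hcos := hasDerivWithinAt_cos_of_sin (fun t ht => (h t ht).1) hξ hsin.hasDerivWithinAt
  refine (hcos.fun_add ((hU.fun_pow 2).const_mul (B / 2)).hasDerivWithinAt).congr_deriv ?_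
  push_cast
  ring

theorem energy_eq (h : IsCapillarySol B I U ψ) (hI : I.OrdConnected) {ξ₀ ξ₁ : ℝ}
    (hξ₀ : ξ₀ ∈ I) (hξ₁ : ξ₁ ∈ I) :
    cos (ψ ξ₁) + B / 2 * U ξ₁ ^ 2 = cos (ψ ξ₀) + B / 2 * U ξ₀ ^ 2 := by
  have hdist := hI.convex.norm_image_sub_le_of_norm_hasDerivWithin_le
    (fun ξ hξ => h.hasDerivWithinAt_energy hξ) (fun _ _ => norm_zero.le) hξ₀ hξ₁
  rw [zero_mul, norm_le_zero_iff, sub_eq_zero] at hdist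
  exact hdist

end IsCapillarySol

/-- Lemma 2: if a repelling solution curve crosses the axis at `ξ₀` with inclination
`ψ₀ = ψ ξ₀`, and `ξ₁` is a point of height `η = U ξ₁` with inclination `ψ_η = ψ ξ₁`, then
`2(1 − cos ψ₀) ≤ 2(1 − cos ψ_η)`, i.e. `|𝓕| ≤ 2(1 − cos ψ_η)` for the normalized force
`𝓕 = −2(1 − cos ψ₀)`, with equality exactly when `η = 0`. -/
theorem capillary_force_bound
    (B : ℝ) (hB : 0 < B) (I : Set ℝ) (hI : I.OrdConnected)
    (U ψ : ℝ → ℝ) (h : IsCapillarySol B I U ψ)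
    (ξ₀ ξ₁ : ℝ) (hξ₀ : ξ₀ ∈ I) (hξ₁ : ξ₁ ∈ I)
    (hU₀ : U ξ₀ = 0) :
    2 * (1 - Real.cos (ψ ξ₀)) ≤ 2 * (1 - Real.cos (ψ ξ₁)) ∧
      (2 * (1 - Real.cos (ψ ξ₀)) = 2 * (1 - Real.cos (ψ ξ₁)) ↔ U ξ₁ = 0) := by
  have henergy := h.energy_eq hI hξ₀ hξ₁
  rw [hU₀] at henergy
  have hheight : 0 ≤ B / 2 * U ξ₁ ^ 2 := by positivity
  refine ⟨by linarith, ⟨fun heq => ?_, fun hη => ?_⟩⟩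
  · have hsq : B / 2 * U ξ₁ ^ 2 = 0 := by linarith
    simpa [hB.ne'] using hsq
  · rw [hη] at henergy
    linarith
end

section
/- For all real numbers ψ₀, ψ₂ with 0 < ψ₀ < ψ₂ < π/2 one has the strict chain of inequalities ∫_{ψ₀}^{ψ₂} cos ψ/√(cos ψ₀ − cos ψ) dψ > ∫_{ψ₀}^{ψ₂} cos ψ/√(1 − cos ψ) dψ = ∫_{ψ₀}^{ψ₂} cot ψ·√(1 + cos ψ) dψ > ∫_{ψ₀}^{ψ₂} cot ψ dψ = log(sin ψ₂ / sin ψ₀). (Inequality chain (14) of the paper.) -/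
/-!
Near `ψ₀` the tangent-line bound `cos ψ₀ - cos ψ ≥ sin ψ₀ · (ψ - ψ₀)` dominates the first integrand
by a multiple of `(ψ - ψ₀) ^ (-1/2)`, so it is integrable. The two strict inequalities are then
pointwise comparisons of integrands on `(ψ₀, ψ₂)`: `cos ψ₀ < 1` and `√(1 + cos ψ) > 1`. The equality
comes from `sin ψ = √(1 - cos ψ) · √(1 + cos ψ)`, and `log ∘ sin` is a primitive of `cot`.
-/

open Real intervalIntegral MeasureTheory Set

lemma integral_lt_integral_of_forall_mem_Ioo_lt {f g : ℝ → ℝ} {a b : ℝ} (hab : a < b)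
    (hf : IntervalIntegrable f volume a b) (hg : IntervalIntegrable g volume a b)
    (hlt : ∀ x ∈ Ioo a b, f x < g x) : ∫ x in a..b, f x < ∫ x in a..b, g x := by
  have h := intervalIntegral_pos_of_pos_on (hg.sub hf) (fun x hx => sub_pos.2 (hlt x hx)) hab
  rwa [integral_sub hg hf, sub_pos] at h

namespace Real

lemma sin_mul_sub_le_cos_sub_cos {a x : ℝ} (ha : -(π / 2) ≤ a) (hax : a ≤ x) (hx : x ≤ π / 2) :
    sin a * (x - a) ≤ cos a - cos x := by
  have hderiv : ∀ y ∈ interior (Icc a (π / 2)), sin a ≤ deriv (fun y => -cos y) y := by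
    intro y hy
    rw [interior_Icc] at hy
    simpa using sin_le_sin_of_le_of_le_pi_div_two ha hy.2.le hy.1.le
  have h := (convex_Icc a (π / 2)).mul_sub_le_image_sub_of_le_deriv (f := fun y => -cos y)
    continuous_cos.neg.continuousOn (differentiable_cos.neg.differentiableOn) hderiv
    a (left_mem_Icc.2 (hax.trans hx)) x ⟨hax, hx⟩ hax
  linarith

lemma intervalIntegrable_cos_div_sqrt_cos_sub_cos {a b : ℝ} (ha : 0 < a) (hab : a ≤ b)
    (hb : b ≤ π / 2) : IntervalIntegrable (fun x => cos x / √(cos a - cos x)) volume a b := by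
  have hsin : 0 < sin a := sin_pos_of_pos_of_lt_pi ha (by linarith [pi_pos])
  have hmajorant : IntervalIntegrable (fun x => (√(sin a))⁻¹ * (x - a) ^ (-(1 / 2) : ℝ))
      volume a b := by
    simpa using ((intervalIntegrable_rpow' (a := 0) (b := b - a) (r := -(1 / 2))
      (by norm_num)).comp_sub_right a).const_mul (√(sin a))⁻¹
  refine hmajorant.mono_fun
    (measurable_cos.div (measurable_const.sub measurable_cos).sqrt).aestronglyMeasurable ?_
  rw [Filter.EventuallyLE, ae_restrict_iff' measurableSet_uIoc]
  refine Filter.Eventually.of_forall fun x hx => ?_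
  rw [uIoc_of_le hab] at hx
  have hxa : 0 < x - a := sub_pos.2 hx.1
  have htangent := sin_mul_sub_le_cos_sub_cos (by linarith [pi_pos]) hx.1.le (hx.2.trans hb)
  have hmajorant_eq : (√(sin a))⁻¹ * (x - a) ^ (-(1 / 2) : ℝ) = 1 / √(sin a * (x - a)) := by
    rw [sqrt_mul hsin.le, rpow_neg hxa.le, ← sqrt_eq_rpow, one_div, mul_inv]
  rw [hmajorant_eq, norm_div, norm_div, norm_one, norm_of_nonneg (sqrt_nonneg _),
    norm_of_nonneg (sqrt_nonneg _)]
  gcongr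
  exact (norm_eq_abs _).trans_le (abs_cos_le_one x)

lemma cos_div_sqrt_one_sub_cos_lt {a x : ℝ} (ha : 0 < a) (hax : a < x) (hx : x < π / 2) :
    cos x / √(1 - cos x) < cos x / √(cos a - cos x) := by
  have hcos_lt : cos x < cos a := cos_lt_cos_of_nonneg_of_le_pi_div_two ha.le hx.le hax
  have hcos_a_lt_one : cos a < 1 := by
    simpa using cos_lt_cos_of_nonneg_of_le_pi le_rfl (by linarith [pi_pos]) ha
  exact div_lt_div_of_pos_left (cos_pos_of_mem_Ioo ⟨by linarith, hx⟩)
    (sqrt_pos.2 (sub_pos.2 hcos_lt)) (sqrt_lt_sqrt (sub_pos.2 hcos_lt).le (by linarith))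

lemma sqrt_one_sub_cos_mul_sqrt_one_add_cos (x : ℝ) :
    √(1 - cos x) * √(1 + cos x) = |sin x| := by
  rw [← sqrt_mul (by linarith [cos_le_one x]), ← sqrt_sq_eq_abs]
  congr 1
  linear_combination -sin_sq_add_cos_sq x

lemma cos_div_sqrt_one_sub_cos_eq {x : ℝ} (hx : 0 < sin x) :
    cos x / √(1 - cos x) = cos x / sin x * √(1 + cos x) := by
  have hprod := sqrt_one_sub_cos_mul_sqrt_one_add_cos x
  rw [abs_of_pos hx] at hprod
  have hplus : √(1 + cos x) ≠ 0 := by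
    rintro h
    rw [h, mul_zero] at hprod
    exact hx.ne hprod
  rw [← hprod]
  field_simp

lemma cos_div_sin_lt_mul_sqrt_one_add_cos {x : ℝ} (hx₀ : 0 < x) (hx : x < π / 2) :
    cos x / sin x < cos x / sin x * √(1 + cos x) := by
  have hcos : 0 < cos x := cos_pos_of_mem_Ioo ⟨by linarith, hx⟩
  have hsin : 0 < sin x := sin_pos_of_pos_of_lt_pi hx₀ (by linarith)
  exact lt_mul_of_one_lt_right (div_pos hcos hsin) (lt_sqrt_of_sq_lt (by linarith))

lemma integral_cos_div_sin {a b : ℝ} (hsin : ∀ x ∈ uIcc a b, 0 < sin x) :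
    ∫ x in a..b, cos x / sin x = log (sin b / sin a) := by
  have hderiv : ∀ x ∈ uIcc a b, HasDerivAt (fun x => log (sin x)) (cos x / sin x) x :=
    fun x hx => (hasDerivAt_sin x).log (hsin x hx).ne'
  rw [integral_eq_sub_of_hasDerivAt hderiv
      ((continuousOn_cos.div continuousOn_sin fun x hx => (hsin x hx).ne').intervalIntegrable),
    log_div (hsin b right_mem_uIcc).ne' (hsin a left_mem_uIcc).ne']

end Real

/-- Inequality chain (14) of the paper:
`∫ cos ψ/√(cos ψ₀ − cos ψ) > ∫ cos ψ/√(1 − cos ψ) = ∫ cot ψ √(1 + cos ψ) > ∫ cot ψ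
 = log (sin ψ₂ / sin ψ₀)` over `[ψ₀, ψ₂] ⊂ (0, π/2)`. -/
theorem inequality_chain_14 (ψ₀ ψ₂ : ℝ) (h₀ : 0 < ψ₀) (h₀₂ : ψ₀ < ψ₂) (h₂ : ψ₂ < π / 2) :
    (∫ ψ in ψ₀..ψ₂, Real.cos ψ / Real.sqrt (Real.cos ψ₀ - Real.cos ψ)) >
      (∫ ψ in ψ₀..ψ₂, Real.cos ψ / Real.sqrt (1 - Real.cos ψ)) ∧
    (∫ ψ in ψ₀..ψ₂, Real.cos ψ / Real.sqrt (1 - Real.cos ψ)) =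
      (∫ ψ in ψ₀..ψ₂, (Real.cos ψ / Real.sin ψ) * Real.sqrt (1 + Real.cos ψ)) ∧
    (∫ ψ in ψ₀..ψ₂, (Real.cos ψ / Real.sin ψ) * Real.sqrt (1 + Real.cos ψ)) >
      (∫ ψ in ψ₀..ψ₂, Real.cos ψ / Real.sin ψ) ∧
    (∫ ψ in ψ₀..ψ₂, Real.cos ψ / Real.sin ψ) = Real.log (Real.sin ψ₂ / Real.sin ψ₀) := by
  have hsin : ∀ x ∈ uIcc ψ₀ ψ₂, 0 < sin x := fun x hx => by
    rw [uIcc_of_le h₀₂.le] at hx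
    exact sin_pos_of_pos_of_lt_pi (h₀.trans_le hx.1) (by linarith [hx.2, pi_pos])
  have hcot : ContinuousOn (fun x => cos x / sin x) (uIcc ψ₀ ψ₂) :=
    continuousOn_cos.div continuousOn_sin fun x hx => (hsin x hx).ne'
  have hcot_sqrt : ContinuousOn (fun x => cos x / sin x * √(1 + cos x)) (uIcc ψ₀ ψ₂) :=
    hcot.mul (continuous_const.add continuous_cos).sqrt.continuousOn
  have hcongr : EqOn (fun x => cos x / √(1 - cos x)) (fun x => cos x / sin x * √(1 + cos x))
      (uIcc ψ₀ ψ₂) := fun x hx => cos_div_sqrt_one_sub_cos_eq (hsin x hx)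
  refine ⟨?_, integral_congr hcongr, ?_, integral_cos_div_sin hsin⟩
  · exact integral_lt_integral_of_forall_mem_Ioo_lt h₀₂
      ((hcot_sqrt.congr hcongr).intervalIntegrable)
      (intervalIntegrable_cos_div_sqrt_cos_sub_cos h₀ h₀₂.le h₂.le)
      fun x hx => cos_div_sqrt_one_sub_cos_lt h₀ hx.1 (hx.2.trans h₂)
  · exact integral_lt_integral_of_forall_mem_Ioo_lt h₀₂ hcot.intervalIntegrable
      hcot_sqrt.intervalIntegrable fun x hx => cos_div_sin_lt_mul_sqrt_one_add_cos
        (h₀.trans hx.1) (hx.2.trans h₂)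
end

section
/- Let 0 < ψ₀ < ψ₂ < π/2 and let B > 0 satisfy √(2B) = ∫_{ψ₀}^{ψ₂} cos ψ/√(cos ψ₀ − cos ψ) dψ. Then sin ψ₀ > sin ψ₂ · exp(−√(2B)). Consequently, for the symmetric solution, the crossing inclination ψ₀ tends to ψ₂ as the separation parameter B tends to 0, so that asymptotically the meniscus becomes a linear segment at inclination ψ₂. (Conclusion of Case 1 of the meniscus-height estimates in the paper.) -/
/-!
On `(ψ₀, ψ₂)` we have `cos ψ₀ - cos ψ < 1 - cos ψ ≤ 1 - cos² ψ = sin² ψ`, so the integrand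
`cos ψ / √(cos ψ₀ - cos ψ)` strictly dominates `cot ψ`, whose integral over `[ψ₀, ψ₂]` is
`log (sin ψ₂ / sin ψ₀)`. Hence `log (sin ψ₂ / sin ψ₀) < √(2B)`, and exponentiating gives the
estimate. The integrand must be integrable, since otherwise the integral would vanish while
`√(2B) > 0`.
-/

open Real

theorem sqrt_cos_sub_cos_lt_sin {a x : ℝ} (ha : 0 < a) (hax : a < x) (hx : x ≤ π / 2) :
    √(cos a - cos x) < sin x := by
  have hcos_a : cos a < 1 := by
    simpa using cos_lt_cos_of_nonneg_of_le_pi le_rfl (by linarith [pi_pos]) ha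
  have hcos_x : 0 ≤ cos x := cos_nonneg_of_mem_Icc ⟨by linarith [pi_pos], hx⟩
  have hsin_x : 0 < sin x := sin_pos_of_pos_of_lt_pi (by linarith) (by linarith [pi_pos])
  rw [sqrt_lt' hsin_x]
  nlinarith [sin_sq_add_cos_sq x]

theorem cos_div_sin_lt_cos_div_sqrt_cos_sub_cos {a x : ℝ} (ha : 0 < a) (hax : a < x)
    (hx : x < π / 2) :
    cos x / sin x < cos x / √(cos a - cos x) := by
  have hcos_x : 0 < cos x := cos_pos_of_mem_Ioo ⟨by linarith [pi_pos], hx⟩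
  have hcos_lt : cos x < cos a :=
    cos_lt_cos_of_nonneg_of_le_pi ha.le (by linarith [pi_pos]) hax
  exact div_lt_div_of_pos_left hcos_x (sqrt_pos.mpr (by linarith))
    (sqrt_cos_sub_cos_lt_sin ha hax hx.le)

theorem sin_ne_zero_of_mem_uIcc {a b x : ℝ} (ha : 0 < a) (hab : a ≤ b) (hb : b < π)
    (hx : x ∈ Set.uIcc a b) : sin x ≠ 0 := by
  rw [Set.uIcc_of_le hab] at hx
  exact (sin_pos_of_pos_of_lt_pi (ha.trans_le hx.1) (hx.2.trans_lt hb)).ne'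

theorem intervalIntegrable_cos_div_sin {a b : ℝ} (ha : 0 < a) (hab : a ≤ b) (hb : b < π) :
    IntervalIntegrable (fun x => cos x / sin x) MeasureTheory.volume a b :=
  (continuous_cos.continuousOn.div continuous_sin.continuousOn
    fun _ hx => sin_ne_zero_of_mem_uIcc ha hab hb hx).intervalIntegrable

theorem integral_cos_div_sin {a b : ℝ} (ha : 0 < a) (hab : a ≤ b) (hb : b < π) :
    ∫ x in a..b, cos x / sin x = log (sin b) - log (sin a) :=
  intervalIntegral.integral_eq_sub_of_hasDerivAt
    (fun x hx => (hasDerivAt_sin x).log (sin_ne_zero_of_mem_uIcc ha hab hb hx))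
    (intervalIntegrable_cos_div_sin ha hab hb)

theorem log_sin_sub_log_sin_lt_integral {a b : ℝ} (ha : 0 < a) (hab : a < b) (hb : b < π / 2)
    (hint : IntervalIntegrable (fun x => cos x / √(cos a - cos x)) MeasureTheory.volume a b) :
    log (sin b) - log (sin a) < ∫ x in a..b, cos x / √(cos a - cos x) := by
  have hbπ : b < π := by linarith [pi_pos]
  have hcot := intervalIntegrable_cos_div_sin ha hab.le hbπ
  have hgap : 0 < ∫ x in a..b, (cos x / √(cos a - cos x) - cos x / sin x) :=
    intervalIntegral.intervalIntegral_pos_of_pos_on (hint.sub hcot)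
      (fun x hx => sub_pos.mpr
        (cos_div_sin_lt_cos_div_sqrt_cos_sub_cos ha hx.1 (hx.2.trans hb))) hab
  rw [intervalIntegral.integral_sub hint hcot, integral_cos_div_sin ha hab.le hbπ] at hgap
  linarith

/-- Case 1 of the meniscus-height estimates: if the crossing inclination `ψ₀` and the plate
inclination `ψ₂` of the symmetric solution are related to the separation parameter `B` by
`√(2B) = ∫_{ψ₀}^{ψ₂} cos ψ/√(cos ψ₀ − cos ψ) dψ`, then `sin ψ₀ > sin ψ₂ · exp(−√(2B))`;
hence `ψ₀ → ψ₂` as `B → 0`, and asymptotically the meniscus is a linear segment at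
inclination `ψ₂`. -/
theorem symmetric_crossing_angle_estimate
    (B ψ₀ ψ₂ : ℝ) (hB : 0 < B) (h₀ : 0 < ψ₀) (h₀₂ : ψ₀ < ψ₂) (h₂ : ψ₂ < π / 2)
    (hrel : Real.sqrt (2 * B) =
      ∫ ψ in ψ₀..ψ₂, Real.cos ψ / Real.sqrt (Real.cos ψ₀ - Real.cos ψ)) :
    Real.sin ψ₀ > Real.sin ψ₂ * Real.exp (-Real.sqrt (2 * B)) := by
  have hint : IntervalIntegrable (fun ψ => cos ψ / √(cos ψ₀ - cos ψ)) MeasureTheory.volume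
      ψ₀ ψ₂ := by
    by_contra h
    rw [intervalIntegral.integral_undef h] at hrel
    exact (sqrt_pos.mpr (by positivity : 0 < 2 * B)).ne' hrel
  have hlog := log_sin_sub_log_sin_lt_integral h₀ h₀₂ h₂ hint
  rw [← hrel] at hlog
  have hsin₀ : 0 < sin ψ₀ := sin_pos_of_pos_of_lt_pi h₀ (by linarith [pi_pos])
  have hsin₂ : 0 < sin ψ₂ := sin_pos_of_pos_of_lt_pi (h₀.trans h₀₂) (by linarith [pi_pos])
  calc sin ψ₂ * exp (-√(2 * B)) = exp (log (sin ψ₂) - √(2 * B)) := by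
        rw [exp_sub, exp_log hsin₂, exp_neg, div_eq_mul_inv]
    _ < exp (log (sin ψ₀)) := exp_lt_exp.mpr (by linarith)
    _ = sin ψ₀ := exp_log hsin₀
end

section
/- Let B > 0, let 0 < γ₂ < π/2 and set ψ₂ = π/2 − γ₂. Let (U, ψ) be a solution of the capillary ODE system with parameter B on [−1, 1] such that ψ(ξ) ∈ [−ψ₂, ψ₂] for every ξ ∈ [−1, 1] and U(ξ) > 0 for every ξ ∈ [−1, 1]. Let U_M and U_m denote the maximum and minimum of U on [−1, 1]. Then B·(U_M² − U_m²) ≤ 2(1 − sin γ₂), and hence U_M − U_m ≤ 2(1 − sin γ₂)/(B(U_M + U_m)) < 2/(B·U_m). (Estimates (19)–(20) of the paper.) -/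
open Real Set

/-!
Multiplying `(sin ψ)' = B U` by `tan ψ = U'` gives `(cos ψ)' = -(B U²/2)'`, so the energy
`B U²/2 + cos ψ` is constant along a solution. Comparing it at a point where `U` is maximal
(where `cos ψ ≥ cos ψ₂ = sin γ₂`) with a point where `U` is minimal (where `cos ψ ≤ 1`) gives
`B (U_M² - U_m²) ≤ 2 (1 - sin γ₂)`; the remaining two estimates are algebra.
-/

theorem Real.sin_le_cos_of_abs_le_pi_div_two_sub {γ x : ℝ} (hγ : -(π / 2) ≤ γ)
    (hx : |x| ≤ π / 2 - γ) : sin γ ≤ cos x := by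
  rw [← cos_pi_div_two_sub, ← cos_abs x]
  exact cos_le_cos_of_nonneg_of_le_pi (abs_nonneg x) (by linarith) hx

namespace IsCapillarySol

variable {B : ℝ} {I : Set ℝ} {U ψ : ℝ → ℝ}

theorem cos_pos (h : IsCapillarySol B I U ψ) {ξ : ℝ} (hξ : ξ ∈ I) : 0 < cos (ψ ξ) :=
  cos_pos_of_mem_Ioo (h ξ hξ).1

theorem cos_eq_sqrt (h : IsCapillarySol B I U ψ) {ξ : ℝ} (hξ : ξ ∈ I) :
    cos (ψ ξ) = √(1 - sin (ψ ξ) ^ 2) :=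
  cos_eq_sqrt_one_sub_sin_sq (h ξ hξ).1.1.le (h ξ hξ).1.2.le

/- `ψ` itself need not be differentiable, nor stay in `(-π/2, π/2)` off `I`, so `cos ψ` is
differentiated through `√(1 - sin² ψ)`. -/
theorem hasDerivAt_sqrt_one_sub_sin_sq (h : IsCapillarySol B I U ψ) {ξ : ℝ} (hξ : ξ ∈ I) :
    HasDerivAt (fun t => √(1 - sin (ψ t) ^ 2)) (-(B * U ξ * tan (ψ ξ))) ξ := by
  have hne : 1 - sin (ψ ξ) ^ 2 ≠ 0 := by
    rw [← cos_sq']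
    exact pow_ne_zero 2 (h.cos_pos hξ).ne'
  refine ((((h ξ hξ).2.1.pow 2).const_sub 1).sqrt hne).congr_deriv ?_
  rw [Pi.pow_apply, ← h.cos_eq_sqrt hξ, tan_eq_sin_div_cos]
  field_simp
  ring

theorem hasDerivAt_energy (h : IsCapillarySol B I U ψ) {ξ : ℝ} (hξ : ξ ∈ I) :
    HasDerivAt (fun t => B * U t ^ 2 / 2 + √(1 - sin (ψ t) ^ 2)) 0 ξ := by
  refine ((((h ξ hξ).2.2.pow 2).const_mul B).div_const 2).add
    (h.hasDerivAt_sqrt_one_sub_sin_sq hξ) |>.congr_deriv ?_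
  push_cast
  ring

theorem energy_eq_s7 {a b : ℝ} (h : IsCapillarySol B (Icc a b) U ψ) {x y : ℝ} (hx : x ∈ Icc a b)
    (hy : y ∈ Icc a b) :
    B * U x ^ 2 / 2 + cos (ψ x) = B * U y ^ 2 / 2 + cos (ψ y) := by
  have hconst := constant_of_has_deriv_right_zero
    (fun t ht => (h.hasDerivAt_energy ht).continuousAt.continuousWithinAt)
    (fun t ht => (h.hasDerivAt_energy (Ico_subset_Icc_self ht)).hasDerivWithinAt)
  rw [h.cos_eq_sqrt hx, h.cos_eq_sqrt hy, hconst x hx, hconst y hy]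

end IsCapillarySol

theorem sub_le_div_of_mul_sq_sub_sq_le {B M m c : ℝ} (hpos : 0 < B * (M + m))
    (h : B * (M ^ 2 - m ^ 2) ≤ c) : M - m ≤ c / (B * (M + m)) := by
  rw [le_div_iff₀ hpos]
  linarith [show (M - m) * (B * (M + m)) = B * (M ^ 2 - m ^ 2) by ring]

/-- Estimates (19)–(20): for a positive meniscus with inclinations in [−ψ₂, ψ₂], the maximum
and minimum heights satisfy `B(U_M² − U_m²) ≤ 2(1 − sin γ₂)` and hence
`U_M − U_m ≤ 2(1 − sin γ₂)/(B(U_M + U_m)) < 2/(B·U_m)`. -/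
theorem capillary_height_oscillation_bound
    (B : ℝ) (hB : 0 < B) (γ₂ : ℝ) (hγ₂ : 0 < γ₂) (hγ₂' : γ₂ < π / 2)
    (U ψ : ℝ → ℝ) (h : IsCapillarySol B (Set.Icc (-1) 1) U ψ)
    (hψrange : ∀ ξ ∈ Set.Icc (-1 : ℝ) 1, ψ ξ ∈ Set.Icc (-(π / 2 - γ₂)) (π / 2 - γ₂))
    (hUpos : ∀ ξ ∈ Set.Icc (-1 : ℝ) 1, 0 < U ξ)
    (UM Um : ℝ)
    (hUM : IsGreatest (U '' Set.Icc (-1 : ℝ) 1) UM)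
    (hUm : IsLeast (U '' Set.Icc (-1 : ℝ) 1) Um) :
    B * (UM ^ 2 - Um ^ 2) ≤ 2 * (1 - Real.sin γ₂) ∧
    UM - Um ≤ 2 * (1 - Real.sin γ₂) / (B * (UM + Um)) ∧
    2 * (1 - Real.sin γ₂) / (B * (UM + Um)) < 2 / (B * Um) := by
  obtain ⟨ξM, hξM, rfl⟩ := hUM.1
  obtain ⟨ξm, hξm, rfl⟩ := hUm.1
  have hcosM : sin γ₂ ≤ cos (ψ ξM) :=
    sin_le_cos_of_abs_le_pi_div_two_sub (by linarith) (abs_le.2 (hψrange ξM hξM))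
  have hkey : B * (U ξM ^ 2 - U ξm ^ 2) ≤ 2 * (1 - sin γ₂) := by
    linarith [h.energy_eq_s7 hξM hξm, cos_le_one (ψ ξm)]
  have hsin : 0 < sin γ₂ := sin_pos_of_pos_of_lt_pi hγ₂ (by linarith [pi_pos])
  have hm := hUpos ξm hξm
  have hM := hUpos ξM hξM
  refine ⟨hkey, sub_le_div_of_mul_sq_sub_sq_le (by positivity) hkey, ?_⟩
  rw [div_lt_div_iff₀ (by positivity) (by positivity)]
  nlinarith [mul_pos (mul_pos hB hm) hsin, mul_pos hB hM]
end

section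
/- Let B > 0 and let (U, φ) and (V, ω) be two solutions of the capillary ODE system with parameter B on the interval [ξ₁, ξ₂], with φ(ξ₂) = ω(ξ₂) and U(ξ₂) > V(ξ₂). Then U(ξ) > V(ξ) for every ξ ∈ [ξ₁, ξ₂], and the height difference U − V is strictly decreasing on [ξ₁, ξ₂]; in particular 0 < U(ξ) − V(ξ) ≤ U(ξ₁) − V(ξ₁) for every ξ ∈ [ξ₁, ξ₂]. (The key step in the proof of Theorem 1 of the paper: the height difference between neighbouring curves and the symmetric curve decreases on moving from Π₁ to Π₂.) -/
open Real Set

/-!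
Write `s = sin ∘ φ - sin ∘ ω` and `d = U - V`. Then `s' = B d`, and since `sin` and `tan` are
both increasing on `(-π/2, π/2)`, `d' = tan ∘ φ - tan ∘ ω` has the sign of `s`. On an interval
`[c, ξ₂]` on which `d > 0` except possibly at `c`, the function `s` increases strictly to
`s ξ₂ = 0`, so it is negative before `ξ₂` and `d` decreases strictly. If `d` were `≤ 0`
somewhere, this applied at the last such point `c` would give `d c > d ξ₂ > 0`; hence it
applies on all of `[ξ₁, ξ₂]`.
-/

theorem Real.tan_lt_tan_of_sin_lt_sin {x y : ℝ} (hx : x ∈ Ioo (-(π / 2)) (π / 2))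
    (hy : y ∈ Ioo (-(π / 2)) (π / 2)) (h : sin x < sin y) : tan x < tan y :=
  strictMonoOn_tan hx hy <|
    (strictMonoOn_sin.lt_iff_lt (Ioo_subset_Icc_self hx) (Ioo_subset_Icc_self hy)).1 h

section DerivativeSign

variable {f f' : ℝ → ℝ} {a b : ℝ}

theorem strictMonoOn_Icc_of_hasDerivAt_pos (hf : ∀ t ∈ Icc a b, HasDerivAt f (f' t) t)
    (hf' : ∀ t ∈ Ioo a b, 0 < f' t) : StrictMonoOn f (Icc a b) :=
  strictMonoOn_of_hasDerivWithinAt_pos (convex_Icc a b)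
    (fun t ht => (hf t ht).continuousAt.continuousWithinAt)
    (fun t ht => (hf t (interior_subset ht)).hasDerivWithinAt)
    (by simpa only [interior_Icc] using hf')

theorem strictAntiOn_Icc_of_hasDerivAt_neg (hf : ∀ t ∈ Icc a b, HasDerivAt f (f' t) t)
    (hf' : ∀ t ∈ Ioo a b, f' t < 0) : StrictAntiOn f (Icc a b) :=
  strictAntiOn_of_hasDerivWithinAt_neg (convex_Icc a b)
    (fun t ht => (hf t ht).continuousAt.continuousWithinAt)
    (fun t ht => (hf t (interior_subset ht)).hasDerivWithinAt)
    (by simpa only [interior_Icc] using hf')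

end DerivativeSign

section CoupledPair

variable {s d s' d' : ℝ → ℝ} {a b : ℝ}

theorem strictAntiOn_Icc_of_pos_on_Ioc (hs : ∀ t ∈ Icc a b, HasDerivAt s (s' t) t)
    (hd : ∀ t ∈ Icc a b, HasDerivAt d (d' t) t) (hs' : ∀ t ∈ Icc a b, 0 < d t → 0 < s' t)
    (hd' : ∀ t ∈ Icc a b, s t < 0 → d' t < 0) (hsb : s b ≤ 0)
    (hpos : ∀ t ∈ Ioc a b, 0 < d t) : StrictAntiOn d (Icc a b) := by
  have hs_mono : StrictMonoOn s (Icc a b) := strictMonoOn_Icc_of_hasDerivAt_pos hs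
    fun t ht => hs' t (Ioo_subset_Icc_self ht) (hpos t (Ioo_subset_Ioc_self ht))
  refine strictAntiOn_Icc_of_hasDerivAt_neg hd fun t ht => hd' t (Ioo_subset_Icc_self ht) ?_
  calc s t < s b := hs_mono (Ioo_subset_Icc_self ht) ⟨ht.1.le.trans ht.2.le, le_rfl⟩ ht.2
    _ ≤ 0 := hsb

theorem strictAntiOn_Icc_of_pos_right (hs : ∀ t ∈ Icc a b, HasDerivAt s (s' t) t)
    (hd : ∀ t ∈ Icc a b, HasDerivAt d (d' t) t) (hs' : ∀ t ∈ Icc a b, 0 < d t → 0 < s' t)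
    (hd' : ∀ t ∈ Icc a b, s t < 0 → d' t < 0) (hsb : s b ≤ 0) (hdb : 0 < d b) :
    StrictAntiOn d (Icc a b) := by
  refine strictAntiOn_Icc_of_pos_on_Ioc hs hd hs' hd' hsb fun t ht => ?_
  by_contra! hle
  have hK : IsCompact {u ∈ Icc a b | d u ≤ 0} :=
    isCompact_Icc.of_isClosed_subset (ContinuousOn.preimage_isClosed_of_isClosed
      (fun u hu => (hd u hu).continuousAt.continuousWithinAt) isClosed_Icc isClosed_Iic)
      fun _ hu => hu.1
  obtain ⟨c, ⟨hc, hdc⟩, hc_max⟩ := hK.exists_isGreatest ⟨t, Ioc_subset_Icc_self ht, hle⟩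
  have hcb : c < b := lt_of_le_of_ne hc.2 fun h => (h ▸ hdc).not_gt hdb
  have hsub : Icc c b ⊆ Icc a b := Icc_subset_Icc_left hc.1
  have hanti : StrictAntiOn d (Icc c b) :=
    strictAntiOn_Icc_of_pos_on_Ioc (fun u hu => hs u (hsub hu)) (fun u hu => hd u (hsub hu))
      (fun u hu => hs' u (hsub hu)) (fun u hu => hd' u (hsub hu)) hsb fun u hu =>
        lt_of_not_ge fun h => (hc_max ⟨hsub (Ioc_subset_Icc_self hu), h⟩).not_gt hu.1
  linarith [hanti (left_mem_Icc.2 hc.2) (right_mem_Icc.2 hcb.le) hcb]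

end CoupledPair

theorem capillary_height_difference_decreasing_general
    (B : ℝ) (hB : 0 < B) (ξ₁ ξ₂ : ℝ)
    (U φ V ω : ℝ → ℝ)
    (hUφ : IsCapillarySol B (Set.Icc ξ₁ ξ₂) U φ)
    (hVω : IsCapillarySol B (Set.Icc ξ₁ ξ₂) V ω)
    (hincl : φ ξ₂ = ω ξ₂) (htop : U ξ₂ > V ξ₂) :
    (∀ ξ ∈ Set.Icc ξ₁ ξ₂, U ξ > V ξ) ∧
    StrictAntiOn (fun ξ => U ξ - V ξ) (Set.Icc ξ₁ ξ₂) ∧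
    ∀ ξ ∈ Set.Icc ξ₁ ξ₂, 0 < U ξ - V ξ ∧ U ξ - V ξ ≤ U ξ₁ - V ξ₁ := by
  have hs : ∀ t ∈ Icc ξ₁ ξ₂,
      HasDerivAt (fun t => sin (φ t) - sin (ω t)) (B * (U t - V t)) t := fun t ht => by
    simpa only [mul_sub] using (hUφ t ht).2.1.fun_sub (hVω t ht).2.1
  have hd : ∀ t ∈ Icc ξ₁ ξ₂, HasDerivAt (fun t => U t - V t) (tan (φ t) - tan (ω t)) t :=
    fun t ht => (hUφ t ht).2.2.fun_sub (hVω t ht).2.2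
  have hd' : ∀ t ∈ Icc ξ₁ ξ₂, sin (φ t) - sin (ω t) < 0 → tan (φ t) - tan (ω t) < 0 :=
    fun t ht h => sub_neg.2 <| tan_lt_tan_of_sin_lt_sin (hUφ t ht).1 (hVω t ht).1 (sub_neg.1 h)
  have hanti : StrictAntiOn (fun ξ => U ξ - V ξ) (Icc ξ₁ ξ₂) :=
    strictAntiOn_Icc_of_pos_right hs hd (fun _ _ => mul_pos hB) hd'
      (by simp only [hincl, sub_self, le_refl]) (sub_pos.2 htop)
  have hpos : ∀ ξ ∈ Icc ξ₁ ξ₂, 0 < U ξ - V ξ := fun ξ hξ =>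
    (sub_pos.2 htop).trans_le (hanti.antitoneOn hξ (right_mem_Icc.2 (hξ.1.trans hξ.2)) hξ.2)
  exact ⟨fun ξ hξ => sub_pos.1 (hpos ξ hξ), hanti, fun ξ hξ =>
    ⟨hpos ξ hξ, hanti.antitoneOn (left_mem_Icc.2 (hξ.1.trans hξ.2)) hξ hξ.1⟩⟩

/-- Key step in Theorem 1: if two solution curves on [ξ₁, ξ₂] have equal inclinations at ξ₂
with `U ξ₂ > V ξ₂`, then `U > V` throughout, and the height difference `U − V` is strictly
decreasing on [ξ₁, ξ₂]; in particular `0 < U ξ − V ξ ≤ U ξ₁ − V ξ₁` on [ξ₁, ξ₂]. -/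
theorem capillary_height_difference_decreasing
    (B : ℝ) (hB : 0 < B) (ξ₁ ξ₂ : ℝ) (hξ : ξ₁ < ξ₂)
    (U φ V ω : ℝ → ℝ)
    (hUφ : IsCapillarySol B (Set.Icc ξ₁ ξ₂) U φ)
    (hVω : IsCapillarySol B (Set.Icc ξ₁ ξ₂) V ω)
    (hincl : φ ξ₂ = ω ξ₂) (htop : U ξ₂ > V ξ₂) :
    (∀ ξ ∈ Set.Icc ξ₁ ξ₂, U ξ > V ξ) ∧
    StrictAntiOn (fun ξ => U ξ - V ξ) (Set.Icc ξ₁ ξ₂) ∧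
    ∀ ξ ∈ Set.Icc ξ₁ ξ₂, 0 < U ξ - V ξ ∧ U ξ - V ξ ≤ U ξ₁ - V ξ₁ :=
  capillary_height_difference_decreasing_general B hB ξ₁ ξ₂ U φ V ω hUφ hVω hincl htop
end

section
/- For all real numbers s₁, s₂ with −1 < s₁ < s₂ < 0, the function J(s₁) = −∫_{s₁}^{s₂} s/(√(s − s₁)·√(1 − s²)) ds is differentiable in s₁ with derivative ∂J/∂s₁ = s₂/(√(1 − s₂²)·√(s₂ − s₁)) − ∫_{s₁}^{s₂} 1/(√(s − s₁)·(1 − s²)^{3/2}) ds, and this derivative is strictly negative. (Formula (49) of Appendix 5 of the paper.) -/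
/-!
Substituting `s = t + (s₂ - t) u²` turns `∫_t^{s₂} g(s) / √(s - t) ds` into
`2 √(s₂ - t) ∫_0^1 g(t + (s₂ - t) u²) du`, whose integrand is smooth in `t` up to `u = 0`,
so it can be differentiated under the integral sign. Integrating `∫_0^1 g(t + (s₂ - t) u²) du`
by parts against `u` and undoing the substitution gives
`d/dt ∫_t^{s₂} g(s) / √(s - t) ds = ∫_t^{s₂} g'(s) / √(s - t) ds - g(s₂) / √(s₂ - t)`.
With `g(s) = s / √(1 - s²)` we have `g'(s) = (1 - s²)^(-3/2) > 0`, and `s₂ < 0` makes the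
derivative negative.
-/

open Real MeasureTheory Set intervalIntegral

lemma hasDerivAt_add_mul_sq (t d u : ℝ) :
    HasDerivAt (fun u => t + d * u ^ 2) (2 * d * u) u := by
  simpa [mul_comm, mul_assoc, mul_left_comm] using
    ((hasDerivAt_pow 2 u).const_mul d).const_add t

lemma add_sub_mul_sq_mem_Icc {t b u : ℝ} (htb : t ≤ b) (hu : u ∈ Icc (0 : ℝ) 1) :
    t + (b - t) * u ^ 2 ∈ Icc t b := by
  have hu2 : u ^ 2 ≤ 1 := pow_le_one₀ hu.1 hu.2
  constructor <;> nlinarith [sq_nonneg u]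

lemma continuousOn_comp_add_sub_mul_sq {h : ℝ → ℝ} {a b t : ℝ} (hh : ContinuousOn h (Icc a b))
    (ht : t ∈ Icc a b) : ContinuousOn (fun u => h (t + (b - t) * u ^ 2)) (Icc 0 1) :=
  hh.comp (by fun_prop) fun _ hu =>
    Icc_subset_Icc_left ht.1 (add_sub_mul_sq_mem_Icc ht.2 hu)

lemma integral_div_sqrt_sub_eq (f : ℝ → ℝ) (t b : ℝ) :
    ∫ s in t..b, f s / √(s - t) =
      2 * √(b - t) * ∫ u in (0 : ℝ)..1, f (t + (b - t) * u ^ 2) := by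
  rcases le_or_gt b t with hbt | htb
  -- for `b ≤ t` both sides are junk zeros: `√` vanishes on `(-∞, 0]`
  · have hzero : ∀ s ∈ uIcc t b, f s / √(s - t) = 0 := fun s hs => by
      rw [uIcc_of_ge hbt] at hs
      rw [sqrt_eq_zero'.2 (by linarith [hs.2]), div_zero]
    rw [integral_congr hzero, intervalIntegral.integral_zero, sqrt_eq_zero'.2 (by linarith),
      mul_zero, zero_mul]
  have hd : 0 < b - t := sub_pos.2 htb
  have hsubst := integral_Icc_deriv_smul_of_deriv_nonneg (f := fun u => t + (b - t) * u ^ 2)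
    (f' := fun u => 2 * (b - t) * u) (g := fun s => f s / √(s - t)) (by fun_prop)
    (fun u _ => hasDerivAt_add_mul_sq t (b - t) u) (fun u hu => by have := hu.1; positivity)
    zero_le_one
  simp only [smul_eq_mul, add_sub_cancel_left, ne_eq, OfNat.ofNat_ne_zero, not_false_eq_true,
    zero_pow, mul_zero, add_zero, one_pow, mul_one, add_sub_cancel] at hsubst
  rw [integral_of_le htb.le, ← integral_Icc_eq_integral_Ioc, ← hsubst,
    integral_Icc_eq_integral_Ioc, ← integral_of_le zero_le_one,
    ← intervalIntegral.integral_const_mul]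
  refine integral_congr_ae (ae_of_all _ fun u hu => ?_)
  rw [uIoc_of_le zero_le_one] at hu
  rw [sqrt_mul hd.le, sqrt_sq hu.1.le]
  have := hu.1.ne'
  field_simp
  rw [sq_sqrt hd.le, mul_comm]

lemma hasDerivAt_integral_comp_add_sub_mul_sq {g g' : ℝ → ℝ} {a b t₀ : ℝ}
    (hg : ∀ s ∈ Icc a b, HasDerivAt g (g' s) s) (hg' : ContinuousOn g' (Icc a b))
    (ht₀ : t₀ ∈ Ioo a b) :
    HasDerivAt (fun t => ∫ u in (0 : ℝ)..1, g (t + (b - t) * u ^ 2))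
      (∫ u in (0 : ℝ)..1, (1 - u ^ 2) * g' (t₀ + (b - t₀) * u ^ 2)) t₀ := by
  have hgc : ContinuousOn g (Icc a b) := fun s hs => (hg s hs).continuousAt.continuousWithinAt
  obtain ⟨C, hC⟩ := isCompact_Icc.exists_bound_of_continuousOn hg'
  have hmem : ∀ t ∈ Ioo a b, ∀ u ∈ uIoc (0 : ℝ) 1, t + (b - t) * u ^ 2 ∈ Icc a b :=
    fun t ht u hu => Icc_subset_Icc_left ht.1.le <| add_sub_mul_sq_mem_Icc ht.2.le <|
      Ioc_subset_Icc_self (by rwa [uIoc_of_le zero_le_one] at hu)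
  refine (hasDerivAt_integral_of_dominated_loc_of_deriv_le (μ := volume)
    (F := fun t u => g (t + (b - t) * u ^ 2))
    (F' := fun t u => (1 - u ^ 2) * g' (t + (b - t) * u ^ 2)) (bound := fun _ => C)
    (Ioo_mem_nhds ht₀.1 ht₀.2) ?_ ?_ ?_ ?_ intervalIntegrable_const ?_).2
  · filter_upwards [Ioo_mem_nhds ht₀.1 ht₀.2] with t ht
    exact ((continuousOn_comp_add_sub_mul_sq hgc (Ioo_subset_Icc_self ht)).intervalIntegrable_of_Icc
      zero_le_one).def'.aestronglyMeasurable
  · exact (continuousOn_comp_add_sub_mul_sq hgc (Ioo_subset_Icc_self ht₀)).intervalIntegrable_of_Icc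
      zero_le_one
  · exact (((continuous_const.sub (continuous_pow 2)).continuousOn.mul
      (continuousOn_comp_add_sub_mul_sq hg' (Ioo_subset_Icc_self ht₀))).intervalIntegrable_of_Icc
      zero_le_one).def'.aestronglyMeasurable
  · refine ae_of_all _ fun u hu t ht => ?_
    have hu' : u ∈ Ioc (0 : ℝ) 1 := by rwa [uIoc_of_le zero_le_one] at hu
    have h1 : |1 - u ^ 2| ≤ 1 := abs_le.2 ⟨by nlinarith [hu'.1, hu'.2], by nlinarith [sq_nonneg u]⟩
    rw [norm_mul, Real.norm_eq_abs, ← one_mul C]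
    exact mul_le_mul h1 (hC _ (hmem t ht u hu)) (norm_nonneg _) zero_le_one
  · refine ae_of_all _ fun u hu t ht => ?_
    have hφ : HasDerivAt (fun t => t + (b - t) * u ^ 2) (1 - u ^ 2) t :=
      ((hasDerivAt_id' t).add (((hasDerivAt_const t b).sub (hasDerivAt_id' t)).mul_const
        (u ^ 2))).congr_deriv (by ring)
    exact ((hg _ (hmem t ht u hu)).comp t hφ).congr_deriv (mul_comm _ _)

lemma integral_comp_add_sub_mul_sq_eq {g g' : ℝ → ℝ} {t b : ℝ} (htb : t ≤ b)
    (hg : ∀ s ∈ Icc t b, HasDerivAt g (g' s) s) (hg' : ContinuousOn g' (Icc t b)) :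
    ∫ u in (0 : ℝ)..1, g (t + (b - t) * u ^ 2) =
      g b - 2 * (b - t) * ∫ u in (0 : ℝ)..1, u ^ 2 * g' (t + (b - t) * u ^ 2) := by
  have hmem : ∀ u ∈ uIcc (0 : ℝ) 1, t + (b - t) * u ^ 2 ∈ Icc t b := fun u hu =>
    add_sub_mul_sq_mem_Icc htb (by rwa [uIcc_of_le zero_le_one] at hu)
  have hv' : IntervalIntegrable (fun u => g' (t + (b - t) * u ^ 2) * (2 * (b - t) * u))
      volume 0 1 :=
    ((continuousOn_comp_add_sub_mul_sq hg' ⟨le_rfl, htb⟩).mul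
      (by fun_prop)).intervalIntegrable_of_Icc zero_le_one
  have hparts := integral_mul_deriv_eq_deriv_mul (fun u _ => hasDerivAt_id' u)
    (fun u hu => (hg _ (hmem u hu)).comp u (hasDerivAt_add_mul_sq t (b - t) u))
    intervalIntegrable_const hv'
  have hlhs : ∫ u in (0 : ℝ)..1, u * (g' (t + (b - t) * u ^ 2) * (2 * (b - t) * u)) =
      2 * (b - t) * ∫ u in (0 : ℝ)..1, u ^ 2 * g' (t + (b - t) * u ^ 2) := by
    rw [← intervalIntegral.integral_const_mul]
    exact integral_congr fun u _ => by ring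
  simp only [hlhs, Function.comp_def, one_mul, one_pow, mul_one, add_sub_cancel, zero_mul,
    sub_zero] at hparts
  linarith

theorem hasDerivAt_integral_div_sqrt_sub {g g' : ℝ → ℝ} {a b t₀ : ℝ}
    (hg : ∀ s ∈ Icc a b, HasDerivAt g (g' s) s) (hg' : ContinuousOn g' (Icc a b))
    (ht₀ : t₀ ∈ Ioo a b) :
    HasDerivAt (fun t => ∫ s in t..b, g s / √(s - t))
      ((∫ s in t₀..b, g' s / √(s - t₀)) - g b / √(b - t₀)) t₀ := by
  have hd : 0 < b - t₀ := sub_pos.2 ht₀.2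
  have hsqrt : HasDerivAt (fun t => √(b - t)) (-1 / (2 * √(b - t₀))) t₀ := by
    simpa using ((hasDerivAt_const t₀ b).sub (hasDerivAt_id' t₀)).sqrt hd.ne'
  have hΦ := hasDerivAt_integral_comp_add_sub_mul_sq hg hg' ht₀
  have hparts := integral_comp_add_sub_mul_sq_eq ht₀.2.le
    (fun s hs => hg s ⟨ht₀.1.le.trans hs.1, hs.2⟩) (hg'.mono (Icc_subset_Icc_left ht₀.1.le))
  have hg'φ := continuousOn_comp_add_sub_mul_sq hg' (Ioo_subset_Icc_self ht₀)
  have hsplit : ∫ u in (0 : ℝ)..1, (1 - u ^ 2) * g' (t₀ + (b - t₀) * u ^ 2) =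
      (∫ u in (0 : ℝ)..1, g' (t₀ + (b - t₀) * u ^ 2)) -
        ∫ u in (0 : ℝ)..1, u ^ 2 * g' (t₀ + (b - t₀) * u ^ 2) := by
    have hu2g' : IntervalIntegrable (fun u => u ^ 2 * g' (t₀ + (b - t₀) * u ^ 2)) volume 0 1 :=
      ((continuousOn_pow 2).mul hg'φ).intervalIntegrable_of_Icc zero_le_one
    rw [← integral_sub (hg'φ.intervalIntegrable_of_Icc zero_le_one) hu2g']
    exact integral_congr fun u _ => by ring
  simp_rw [integral_div_sqrt_sub_eq _ _ b]
  refine ((hsqrt.const_mul 2).mul hΦ).congr_deriv ?_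
  rw [hsplit, hparts]
  have := sqrt_pos.2 hd
  field_simp
  rw [sq_sqrt hd.le]
  ring

lemma continuousOn_one_div_one_sub_sq_rpow {S : Set ℝ} (hS : ∀ x ∈ S, x ^ 2 < 1) :
    ContinuousOn (fun x : ℝ => 1 / (1 - x ^ 2) ^ ((3 : ℝ) / 2)) S :=
  continuousOn_const.div
    ((continuousOn_const.sub (continuousOn_pow 2)).rpow_const fun _ _ => Or.inr (by norm_num))
    fun x hx => (rpow_pos_of_pos (sub_pos.2 (hS x hx)) _).ne'

lemma hasDerivAt_div_sqrt_one_sub_sq {x : ℝ} (hx : x ^ 2 < 1) :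
    HasDerivAt (fun s => s / √(1 - s ^ 2)) (1 / (1 - x ^ 2) ^ ((3 : ℝ) / 2)) x := by
  have hpos : 0 < 1 - x ^ 2 := by linarith
  have hsqrt : HasDerivAt (fun s => √(1 - s ^ 2)) (-(2 * x) / (2 * √(1 - x ^ 2))) x := by
    simpa using ((hasDerivAt_pow 2 x).const_sub 1).sqrt hpos.ne'
  refine ((hasDerivAt_id x).div hsqrt (sqrt_pos.2 hpos).ne').congr_deriv ?_
  rw [show (3 : ℝ) / 2 = 1 + 1 / 2 by norm_num, rpow_add hpos, rpow_one, ← sqrt_eq_rpow]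
  have := sqrt_pos.2 hpos
  field_simp
  rw [id_eq, sq_sqrt hpos.le]
  ring

/-- Formula (49) of Appendix 5: for −1 < s₁ < s₂ < 0, the function
`J(t) = −∫_{t}^{s₂} s/(√(s − t)√(1 − s²)) ds` is differentiable at s₁ with derivative
`s₂/(√(1 − s₂²)√(s₂ − s₁)) − ∫_{s₁}^{s₂} ds/(√(s − s₁)(1 − s²)^{3/2})`, and this derivative
is strictly negative. -/
theorem J_hasDerivAt_and_neg (s₁ s₂ : ℝ) (h₁ : -1 < s₁) (h₁₂ : s₁ < s₂) (h₂ : s₂ < 0) :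
    HasDerivAt
      (fun t => -∫ s in t..s₂, s / (Real.sqrt (s - t) * Real.sqrt (1 - s ^ 2)))
      (s₂ / (Real.sqrt (1 - s₂ ^ 2) * Real.sqrt (s₂ - s₁)) -
        ∫ s in s₁..s₂, 1 / (Real.sqrt (s - s₁) * (1 - s ^ 2) ^ ((3 : ℝ) / 2))) s₁ ∧
    s₂ / (Real.sqrt (1 - s₂ ^ 2) * Real.sqrt (s₂ - s₁)) -
        (∫ s in s₁..s₂, 1 / (Real.sqrt (s - s₁) * (1 - s ^ 2) ^ ((3 : ℝ) / 2))) < 0 := by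
  have hsq : ∀ s ∈ Icc ((s₁ - 1) / 2) s₂, s ^ 2 < 1 := fun s hs => by nlinarith [hs.1, hs.2]
  have hderiv := hasDerivAt_integral_div_sqrt_sub (g := fun s => s / √(1 - s ^ 2))
    (fun s hs => hasDerivAt_div_sqrt_one_sub_sq (hsq s hs))
    (continuousOn_one_div_one_sub_sq_rpow hsq) ⟨by linarith, h₁₂⟩
  have hfun : (fun t => -∫ s in t..s₂, s / (√(s - t) * √(1 - s ^ 2))) =
      fun t => -∫ s in t..s₂, s / √(1 - s ^ 2) / √(s - t) :=
    funext fun t => congrArg Neg.neg (integral_congr fun s _ => by ring)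
  have hval : s₂ / (√(1 - s₂ ^ 2) * √(s₂ - s₁)) -
      ∫ s in s₁..s₂, 1 / (√(s - s₁) * (1 - s ^ 2) ^ ((3 : ℝ) / 2)) =
      -((∫ s in s₁..s₂, 1 / (1 - s ^ 2) ^ ((3 : ℝ) / 2) / √(s - s₁)) -
        s₂ / √(1 - s₂ ^ 2) / √(s₂ - s₁)) := by
    rw [integral_congr (g := fun s => 1 / (1 - s ^ 2) ^ ((3 : ℝ) / 2) / √(s - s₁))
      fun s _ => by ring]
    ring
  have hpos : 0 < √(1 - s₂ ^ 2) * √(s₂ - s₁) :=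
    mul_pos (sqrt_pos.2 (sub_pos.2 (hsq s₂ ⟨by linarith, le_rfl⟩)))
      (sqrt_pos.2 (sub_pos.2 h₁₂))
  have hint : 0 ≤ ∫ s in s₁..s₂, 1 / (√(s - s₁) * (1 - s ^ 2) ^ ((3 : ℝ) / 2)) :=
    integral_nonneg h₁₂.le fun s hs => one_div_nonneg.2 (mul_nonneg (sqrt_nonneg _)
      (rpow_nonneg (sub_pos.2 (hsq s ⟨by linarith [hs.1], hs.2⟩)).le _))
  refine ⟨?_, by linarith [div_neg_of_neg_of_pos h₂ hpos]⟩
  rw [hfun, hval]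
  exact hderiv.neg
end

section
/- Fix ψ₂ with 0 < ψ₂ ≤ π/2. For every c > 0 there exists a unique ψ₁ ∈ (0, ψ₂) such that ∫_{ψ₁}^{ψ₂} cos ψ/√(cos ψ₁ − cos ψ) dψ = c; that is, ψ₁ ↦ 𝒥(ψ₁; ψ₂) is a bijection from (0, ψ₂) onto (0, ∞). In particular, for every B > 0 the inclination ψ₁⁰ of the barrier II on Π₁ is determined uniquely by the relation 2√(2B) = 𝒥(ψ₁⁰; ψ₂). (The existence-and-uniqueness assertion of Appendix 5 of the paper.) -/
/-!
With `a = cos ψ₁`, `b = cos ψ₂` and `h x = x / √(1 - x²)` (which is `cot (arccos x)`), the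
substitution `cos ψ = b + (a - b) v` turns `𝒥(ψ₁; ψ₂)` into
`√(a - b) * ∫₀¹ h (b + (a - b) v) / √(1 - v) dv`. Because `b ≥ 0` and `h` is positive and
increasing on `(0, 1)`, this is strictly increasing in `a ∈ (b, 1)`, and it is continuous by
dominated convergence with the integrable majorant `h a₁ / √(1 - v)`. It tends to `0` as `a → b`,
where the integral stays bounded, and to `∞` as `a → 1`, since on `(1/2, 1)` the integrand is at
least `(a - b) / 4 * (2 - a - v)⁻¹`, whose integral is of order `log (1 / (1 - a))`. The
intermediate value theorem, and `cos` mapping `(0, ψ₂)` bijectively onto `(cos ψ₂, 1)`, finish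
the proof.
-/

open Real MeasureTheory Set Filter Topology

namespace BarrierInclination

noncomputable def cotArccos (x : ℝ) : ℝ := x / √(1 - x ^ 2)

theorem cotArccos_pos {x : ℝ} (h₀ : 0 < x) (h₁ : x < 1) : 0 < cotArccos x :=
  div_pos h₀ (sqrt_pos.2 (by nlinarith))

theorem cotArccos_nonneg {x : ℝ} (h : 0 ≤ x) : 0 ≤ cotArccos x :=
  div_nonneg h (sqrt_nonneg _)

theorem monotoneOn_cotArccos : MonotoneOn cotArccos (Ico 0 1) := by
  intro x hx y hy hxy
  exact div_le_div₀ (hx.1.trans hxy) hxy (sqrt_pos.2 (by nlinarith [hy.1, hy.2]))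
    (sqrt_le_sqrt (by nlinarith [hx.1]))

theorem continuousAt_cotArccos {x : ℝ} (hx : x ∈ Ioo (-1) 1) : ContinuousAt cotArccos x :=
  continuousAt_id.div (by fun_prop) (sqrt_pos.2 (by nlinarith [hx.1, hx.2])).ne'

theorem sin_mul_cotArccos_cos {ψ : ℝ} (h : 0 < sin ψ) : sin ψ * cotArccos (cos ψ) = cos ψ := by
  rw [cotArccos, ← sin_sq, sqrt_sq h.le]
  field_simp

theorem intervalIntegrable_div_sqrt_one_sub (c : ℝ) :
    IntervalIntegrable (fun v => c / √(1 - v)) volume 0 1 := by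
  have h : IntervalIntegrable (fun v : ℝ => (1 - v) ^ (-(1 / 2) : ℝ)) volume 0 1 := by
    simpa using ((intervalIntegral.intervalIntegrable_rpow' (a := 0) (b := 1)
      (r := -(1 / 2)) (by norm_num)).comp_sub_left 1).symm
  refine (h.const_mul c).congr ?_
  intro v hv
  rw [uIoc_of_le zero_le_one] at hv
  dsimp only
  rw [rpow_neg (by linarith [hv.2]), ← sqrt_eq_rpow, div_eq_mul_inv]

noncomputable def scaledIntegrand (b a v : ℝ) : ℝ := cotArccos (b + (a - b) * v) / √(1 - v)

noncomputable def scaledIntegral (b a : ℝ) : ℝ := ∫ v in (0 : ℝ)..1, scaledIntegrand b a v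

noncomputable def jOfCos (b a : ℝ) : ℝ := √(a - b) * scaledIntegral b a

theorem measurable_scaledIntegrand (b a : ℝ) : Measurable (scaledIntegrand b a) := by
  unfold scaledIntegrand cotArccos
  fun_prop

section Integrand

variable {a a₁ b v : ℝ}

theorem add_sub_mul_mem_Icc (hab : b ≤ a) (hv : v ∈ Icc 0 1) : b + (a - b) * v ∈ Icc b a :=
  ⟨by nlinarith [hv.1], by nlinarith [hv.2]⟩

theorem add_sub_mul_mem_Ioo (hab : b < a) (hv : v ∈ Ioo 0 1) : b + (a - b) * v ∈ Ioo b a :=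
  ⟨by nlinarith [hv.1], by nlinarith [hv.2]⟩

theorem scaledIntegrand_nonneg (hb : 0 ≤ b) (hab : b ≤ a) (hv : v ∈ Icc 0 1) :
    0 ≤ scaledIntegrand b a v :=
  div_nonneg (cotArccos_nonneg (hb.trans (add_sub_mul_mem_Icc hab hv).1)) (sqrt_nonneg _)

theorem scaledIntegrand_pos (hb : 0 ≤ b) (hab : b < a) (ha : a < 1) (hv : v ∈ Ioo 0 1) :
    0 < scaledIntegrand b a v := by
  obtain ⟨hbx, hxa⟩ := add_sub_mul_mem_Ioo hab hv
  exact div_pos (cotArccos_pos (by linarith) (by linarith)) (sqrt_pos.2 (by linarith [hv.2]))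

theorem scaledIntegrand_le_scaledIntegrand (hb : 0 ≤ b) (hab : b ≤ a) (ha : a ≤ a₁)
    (ha₁ : a₁ < 1) (hv : v ∈ Icc 0 1) : scaledIntegrand b a v ≤ scaledIntegrand b a₁ v := by
  obtain ⟨hbx, hxa⟩ := add_sub_mul_mem_Icc hab hv
  obtain ⟨hbx₁, hxa₁⟩ := add_sub_mul_mem_Icc (hab.trans ha) hv
  refine div_le_div_of_nonneg_right (monotoneOn_cotArccos ⟨by linarith, by linarith⟩
    ⟨by linarith, by linarith⟩ ?_) (sqrt_nonneg _)
  nlinarith [hv.1]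

theorem scaledIntegrand_le (hb : 0 ≤ b) (hab : b ≤ a) (ha : a ≤ a₁) (ha₁ : a₁ < 1)
    (hv : v ∈ Icc 0 1) : scaledIntegrand b a v ≤ cotArccos a₁ / √(1 - v) := by
  obtain ⟨hbx, hxa⟩ := add_sub_mul_mem_Icc hab hv
  exact div_le_div_of_nonneg_right
    (monotoneOn_cotArccos ⟨by linarith, by linarith⟩ ⟨by linarith, ha₁⟩ (by linarith))
    (sqrt_nonneg _)

theorem continuousAt_scaledIntegrand (hb : -1 < b) (hab : b ≤ a) (ha : a < 1)
    (hv : v ∈ Icc 0 1) : ContinuousAt (scaledIntegrand b · v) a := by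
  obtain ⟨hbx, hxa⟩ := add_sub_mul_mem_Icc hab hv
  exact ((continuousAt_cotArccos ⟨by linarith, by linarith⟩).comp (by fun_prop)).div_const _

theorem intervalIntegrable_scaledIntegrand (hb : 0 ≤ b) (hab : b ≤ a) (ha : a < 1) :
    IntervalIntegrable (scaledIntegrand b a) volume 0 1 := by
  refine (intervalIntegrable_div_sqrt_one_sub (cotArccos a)).mono_fun'
    (measurable_scaledIntegrand b a).aestronglyMeasurable ?_
  rw [uIoc_of_le zero_le_one]
  filter_upwards [ae_restrict_mem measurableSet_Ioc] with v hv
  rw [norm_of_nonneg (scaledIntegrand_nonneg hb hab (Ioc_subset_Icc_self hv))]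
  exact scaledIntegrand_le hb hab le_rfl ha (Ioc_subset_Icc_self hv)

end Integrand

section ScaledIntegral

variable {a b : ℝ}

theorem scaledIntegral_pos (hb : 0 ≤ b) (hab : b < a) (ha : a < 1) : 0 < scaledIntegral b a :=
  intervalIntegral.intervalIntegral_pos_of_pos_on
    (intervalIntegrable_scaledIntegrand hb hab.le ha)
    (fun _ hv => scaledIntegrand_pos hb hab ha hv) one_pos

theorem monotoneOn_scaledIntegral (hb : 0 ≤ b) : MonotoneOn (scaledIntegral b) (Ico b 1) :=
  fun _ ha _ ha₁ h => intervalIntegral.integral_mono_on zero_le_one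
    (intervalIntegrable_scaledIntegrand hb ha.1 (h.trans_lt ha₁.2))
    (intervalIntegrable_scaledIntegrand hb ha₁.1 ha₁.2)
    fun _ hv => scaledIntegrand_le_scaledIntegrand hb ha.1 h ha₁.2 hv

theorem continuousOn_scaledIntegral (hb : 0 ≤ b) : ContinuousOn (scaledIntegral b) (Ioo b 1) := by
  intro a₀ ha₀
  obtain ⟨a₁, ha₀a₁, ha₁⟩ := exists_between ha₀.2
  have hnhds : Ioo b a₁ ∈ 𝓝 a₀ := Ioo_mem_nhds ha₀.1 ha₀a₁
  refine ContinuousAt.continuousWithinAt <|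
    intervalIntegral.continuousAt_of_dominated_interval
      (bound := fun v => cotArccos a₁ / √(1 - v))
      (Eventually.of_forall fun a => (measurable_scaledIntegrand b a).aestronglyMeasurable) ?_
      (intervalIntegrable_div_sqrt_one_sub _) ?_
  · filter_upwards [hnhds] with a ha
    refine ae_of_all _ fun v hv => ?_
    rw [uIoc_of_le zero_le_one] at hv
    rw [norm_of_nonneg (scaledIntegrand_nonneg hb ha.1.le (Ioc_subset_Icc_self hv))]
    exact scaledIntegrand_le hb ha.1.le ha.2.le ha₁ (Ioc_subset_Icc_self hv)
  · refine ae_of_all _ fun v hv => ?_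
    rw [uIoc_of_le zero_le_one] at hv
    exact continuousAt_scaledIntegrand (by linarith [ha₀.1]) ha₀.1.le ha₀.2
      (Ioc_subset_Icc_self hv)

theorem le_scaledIntegrand {v : ℝ} (hb : 0 ≤ b) (hab : b < a) (ha : a < 1)
    (hv : v ∈ Ioo (1 / 2) 1) : (a - b) / 4 * (2 - a - v)⁻¹ ≤ scaledIntegrand b a v := by
  obtain ⟨hv₀, hv₁⟩ := hv
  obtain ⟨hbx, hxa⟩ := add_sub_mul_mem_Ioo hab ⟨by linarith, hv₁⟩
  set x := b + (a - b) * v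
  -- `1 - x² ≤ 2 (1 - x)` and `1 - x = (1 - a) + (a - b) (1 - v) ≤ 2 - a - v`
  have hden : √(1 - x ^ 2) * √(1 - v) ≤ 2 * (2 - a - v) := by
    rw [← sqrt_mul (by nlinarith), sqrt_le_iff]
    refine ⟨by linarith, ?_⟩
    have h1x : 1 - x ≤ 2 - a - v := by nlinarith
    nlinarith [mul_le_mul_of_nonneg_right h1x (by linarith : (0 : ℝ) ≤ 1 - v)]
  have hnum : (a - b) / 2 ≤ x := by nlinarith
  calc (a - b) / 4 * (2 - a - v)⁻¹ = (a - b) / 2 / (2 * (2 - a - v)) := by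
        field_simp; ring
    _ ≤ x / (√(1 - x ^ 2) * √(1 - v)) :=
        div_le_div₀ (by linarith) hnum (mul_pos (sqrt_pos.2 (by nlinarith))
          (sqrt_pos.2 (by linarith))) hden
    _ = scaledIntegrand b a v := by rw [scaledIntegrand, cotArccos, div_div]

theorem mul_log_le_scaledIntegral (hb : 0 ≤ b) (hab : b < a) (ha : a < 1) :
    (a - b) / 4 * log ((3 / 2 - a) / (1 - a)) ≤ scaledIntegral b a := by
  have hint : ∫ v in (1 / 2 : ℝ)..1, (a - b) / 4 * (2 - a - v)⁻¹
      = (a - b) / 4 * log ((3 / 2 - a) / (1 - a)) := by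
    rw [intervalIntegral.integral_const_mul,
      intervalIntegral.integral_comp_sub_left (fun u => u⁻¹),
      integral_inv_of_pos (by linarith) (by linarith)]
    ring_nf
  have hcont : ContinuousOn (fun v => (a - b) / 4 * (2 - a - v)⁻¹) (uIcc (1 / 2) 1) := by
    refine continuousOn_const.mul ((continuousOn_const.sub continuousOn_id).inv₀ fun v hv => ?_)
    rw [uIcc_of_le (by norm_num)] at hv
    simp only [Pi.sub_apply, id]
    linarith [hv.2]
  have hK := intervalIntegrable_scaledIntegrand hb hab.le ha
  calc (a - b) / 4 * log ((3 / 2 - a) / (1 - a))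
      = ∫ v in (1 / 2 : ℝ)..1, (a - b) / 4 * (2 - a - v)⁻¹ := hint.symm
    _ ≤ ∫ v in (1 / 2 : ℝ)..1, scaledIntegrand b a v :=
        intervalIntegral.integral_mono_on_of_le_Ioo (by norm_num) hcont.intervalIntegrable
          (hK.mono_set (uIcc_subset_uIcc (by norm_num [uIcc_of_le]) (by simp)))
          fun v hv => le_scaledIntegrand hb hab ha hv
    _ ≤ scaledIntegral b a :=
        intervalIntegral.integral_mono_interval (by norm_num) (by norm_num) le_rfl
          ((ae_restrict_mem measurableSet_Ioc).mono fun v hv =>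
            scaledIntegrand_nonneg hb hab.le (Ioc_subset_Icc_self hv)) hK

end ScaledIntegral

section JOfCos

variable {b : ℝ}

theorem jOfCos_pos (hb : 0 ≤ b) {a : ℝ} (ha : a ∈ Ioo b 1) : 0 < jOfCos b a :=
  mul_pos (sqrt_pos.2 (sub_pos.2 ha.1)) (scaledIntegral_pos hb ha.1 ha.2)

theorem strictMonoOn_jOfCos (hb : 0 ≤ b) : StrictMonoOn (jOfCos b) (Ioo b 1) := by
  intro a ha a₁ ha₁ h
  calc √(a - b) * scaledIntegral b a < √(a₁ - b) * scaledIntegral b a :=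
        mul_lt_mul_of_pos_right (sqrt_lt_sqrt (sub_nonneg.2 ha.1.le) (by linarith))
          (scaledIntegral_pos hb ha.1 ha.2)
    _ ≤ √(a₁ - b) * scaledIntegral b a₁ :=
        mul_le_mul_of_nonneg_left (monotoneOn_scaledIntegral hb (Ioo_subset_Ico_self ha)
          (Ioo_subset_Ico_self ha₁) h.le) (sqrt_nonneg _)

theorem continuousOn_jOfCos (hb : 0 ≤ b) : ContinuousOn (jOfCos b) (Ioo b 1) :=
  (by fun_prop : Continuous fun a => √(a - b)).continuousOn.mul (continuousOn_scaledIntegral hb)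

theorem tendsto_jOfCos_nhdsGT (hb : 0 ≤ b) (hb₁ : b < 1) :
    Tendsto (jOfCos b) (𝓝[>] b) (𝓝 0) := by
  obtain ⟨a₁, hba₁, ha₁⟩ := exists_between hb₁
  set M := ∫ v in (0 : ℝ)..1, cotArccos a₁ / √(1 - v)
  have hupper : Tendsto (fun a => √(a - b) * M) (𝓝[>] b) (𝓝 0) :=
    tendsto_nhdsWithin_of_tendsto_nhds <|
      (by fun_prop : Continuous fun a => √(a - b) * M).tendsto' b 0 (by simp)
  refine tendsto_of_tendsto_of_tendsto_of_le_of_le' tendsto_const_nhds hupper ?_ ?_ <;>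
    filter_upwards [Ioo_mem_nhdsGT hba₁] with a ha
  · exact (jOfCos_pos hb ⟨ha.1, ha.2.trans ha₁⟩).le
  · exact mul_le_mul_of_nonneg_left (intervalIntegral.integral_mono_on zero_le_one
      (intervalIntegrable_scaledIntegrand hb ha.1.le (ha.2.trans ha₁))
      (intervalIntegrable_div_sqrt_one_sub _)
      fun v hv => scaledIntegrand_le hb ha.1.le ha.2.le ha₁ hv) (sqrt_nonneg _)

theorem tendsto_jOfCos_nhdsLT_one (hb : 0 ≤ b) (hb₁ : b < 1) :
    Tendsto (jOfCos b) (𝓝[<] 1) atTop := by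
  have hgap : Tendsto (fun a : ℝ => 1 - a) (𝓝[<] 1) (𝓝[>] 0) := by
    refine tendsto_nhdsWithin_iff.2 ⟨tendsto_nhdsWithin_of_tendsto_nhds ?_,
      eventually_nhdsWithin_of_forall fun a ha => mem_Ioi.2 (sub_pos.2 ha)⟩
    exact (continuous_const.sub continuous_id).tendsto' 1 0 (sub_self 1)
  have hratio : Tendsto (fun a : ℝ => (3 / 2 - a) / (1 - a)) (𝓝[<] 1) atTop := by
    have hnum : Tendsto (fun a : ℝ => 3 / 2 - a) (𝓝[<] 1) (𝓝 (1 / 2)) :=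
      tendsto_nhdsWithin_of_tendsto_nhds <|
        (continuous_const.sub continuous_id).tendsto' 1 (1 / 2) (by norm_num)
    exact (hnum.pos_mul_atTop (by norm_num) (tendsto_inv_nhdsGT_zero.comp hgap)).congr
      fun a => (div_eq_mul_inv _ _).symm
  have hcoef : Tendsto (fun a => √(a - b) * ((a - b) / 4)) (𝓝[<] 1)
      (𝓝 (√(1 - b) * ((1 - b) / 4))) :=
    tendsto_nhdsWithin_of_tendsto_nhds <|
      (by fun_prop : Continuous fun a => √(a - b) * ((a - b) / 4)).tendsto 1
  refine tendsto_atTop_mono' _ ?_ (hcoef.pos_mul_atTop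
    (mul_pos (sqrt_pos.2 (sub_pos.2 hb₁)) (by linarith)) (tendsto_log_atTop.comp hratio))
  filter_upwards [Ioo_mem_nhdsLT hb₁] with a ha
  calc √(a - b) * ((a - b) / 4) * log ((3 / 2 - a) / (1 - a))
      = √(a - b) * ((a - b) / 4 * log ((3 / 2 - a) / (1 - a))) := mul_assoc _ _ _
    _ ≤ jOfCos b a :=
        mul_le_mul_of_nonneg_left (mul_log_le_scaledIntegral hb ha.1 ha.2) (sqrt_nonneg _)

theorem bijOn_jOfCos (hb : 0 ≤ b) (hb₁ : b < 1) : BijOn (jOfCos b) (Ioo b 1) (Ioi 0) := by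
  refine ⟨fun a ha => jOfCos_pos hb ha, (strictMonoOn_jOfCos hb).injOn, fun c hc => ?_⟩
  obtain ⟨a₀, hc₀, ha₀⟩ := (((tendsto_jOfCos_nhdsGT hb hb₁).eventually (gt_mem_nhds hc)).and
    (Ioo_mem_nhdsGT hb₁)).exists
  obtain ⟨a₁, hc₁, ha₁⟩ := (((tendsto_jOfCos_nhdsLT_one hb hb₁).eventually_gt_atTop c).and
    (Ioo_mem_nhdsLT hb₁)).exists
  have hsub : uIcc a₀ a₁ ⊆ Ioo b 1 := ordConnected_Ioo.uIcc_subset ha₀ ha₁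
  obtain ⟨a, ha, rfl⟩ := intermediate_value_uIcc ((continuousOn_jOfCos hb).mono hsub)
    (mem_uIcc_of_le hc₀.le hc₁.le)
  exact ⟨a, hsub ha, rfl⟩

end JOfCos

theorem integral_cos_div_sqrt_eq {a ψ₁ ψ₂ : ℝ} (h₁ : 0 < ψ₁) (h₁₂ : ψ₁ ≤ ψ₂) (h₂ : ψ₂ < π) :
    ∫ ψ in ψ₁..ψ₂, cos ψ / √(a - cos ψ) = ∫ x in cos ψ₂..cos ψ₁, cotArccos x / √(a - x) := by
  have hsin : ∀ ψ ∈ Icc ψ₁ ψ₂, 0 < sin ψ := fun ψ hψ =>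
    sin_pos_of_pos_of_lt_pi (h₁.trans_le hψ.1) (hψ.2.trans_lt h₂)
  have hsubst := integral_Icc_deriv_smul_of_deriv_nonpos (f := cos) (f' := fun ψ => -sin ψ)
    (g := fun x => cotArccos x / √(a - x)) continuousOn_cos (fun ψ _ => hasDerivAt_cos ψ)
    (fun ψ hψ => neg_nonpos.2 (hsin ψ (Ioo_subset_Icc_self hψ)).le) h₁₂
  rw [intervalIntegral.integral_of_le h₁₂, ← integral_Icc_eq_integral_Ioc,
    intervalIntegral.integral_of_le (cos_le_cos_of_nonneg_of_le_pi h₁.le h₂.le h₁₂),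
    ← integral_Icc_eq_integral_Ioc,
    ← neg_neg (∫ x in Icc (cos ψ₂) (cos ψ₁), cotArccos x / √(a - x)), ← hsubst, ← integral_neg]
  refine setIntegral_congr_fun measurableSet_Icc fun ψ hψ => ?_
  rw [smul_eq_mul, neg_mul, neg_neg, ← mul_div_assoc, sin_mul_cotArccos_cos (hsin ψ hψ)]

theorem integral_cotArccos_div_sqrt_eq {a b : ℝ} (hab : b < a) :
    ∫ x in b..a, cotArccos x / √(a - x) = jOfCos b a := by
  have hsubst := intervalIntegral.smul_integral_comp_add_mul
    (f := fun x => cotArccos x / √(a - x)) (a := 0) (b := 1) (a - b) b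
  simp only [mul_zero, add_zero, mul_one, add_sub_cancel] at hsubst
  rw [← hsubst, smul_eq_mul, jOfCos, scaledIntegral, ← intervalIntegral.integral_const_mul,
    ← intervalIntegral.integral_const_mul]
  congr 1
  ext v
  have hs : √(a - b) ≠ 0 := (sqrt_pos.2 (sub_pos.2 hab)).ne'
  rw [scaledIntegrand, show a - (b + (a - b) * v) = (a - b) * (1 - v) by ring,
    sqrt_mul (sub_nonneg.2 hab.le)]
  field_simp
  rw [sq_sqrt (sub_nonneg.2 hab.le)]
  ring

theorem bijOn_cos_Ioo {ψ₂ : ℝ} (h₂ : 0 < ψ₂) (h₂π : ψ₂ ≤ π) :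
    BijOn cos (Ioo 0 ψ₂) (Ioo (cos ψ₂) 1) := by
  refine ⟨fun ψ hψ => ⟨cos_lt_cos_of_nonneg_of_le_pi hψ.1.le h₂π hψ.2, ?_⟩,
    injOn_cos.mono (Ioo_subset_Icc_self.trans (Icc_subset_Icc_right h₂π)), fun x hx => ?_⟩
  · simpa using cos_lt_cos_of_nonneg_of_le_pi le_rfl (hψ.2.le.trans h₂π) hψ.1
  · have hx₁ : -1 ≤ x := (neg_one_le_cos ψ₂).trans hx.1.le
    refine ⟨arccos x, ⟨arccos_pos.2 hx.2, ?_⟩, cos_arccos hx₁ hx.2.le⟩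
    simpa [arccos_cos h₂.le h₂π] using
      strictAntiOn_arccos ⟨neg_one_le_cos ψ₂, cos_le_one ψ₂⟩ ⟨hx₁, hx.2.le⟩ hx.1

end BarrierInclination

theorem Set.BijOn.existsUnique_mem_and_eq {α β : Type*} {f : α → β} {s : Set α} {t : Set β}
    (h : BijOn f s t) {y : β} (hy : y ∈ t) : ∃! x, x ∈ s ∧ f x = y := by
  obtain ⟨x, hx, rfl⟩ := h.surjOn hy
  exact ⟨x, ⟨hx, rfl⟩, fun x' hx' => h.injOn hx'.1 hx hx'.2⟩

open BarrierInclination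

/-- Appendix 5, existence and uniqueness: for fixed ψ₂ ∈ (0, π/2], the map
`ψ₁ ↦ 𝒥(ψ₁; ψ₂) = ∫_{ψ₁}^{ψ₂} cos ψ/√(cos ψ₁ − cos ψ) dψ` is a bijection from (0, ψ₂)
onto (0, ∞); in particular, for every B > 0 the inclination ψ₁⁰ of the barrier II on Π₁ is
determined uniquely by `2√(2B) = 𝒥(ψ₁⁰; ψ₂)`. -/
theorem J_bijective (ψ₂ : ℝ) (h₂ : 0 < ψ₂) (h₂' : ψ₂ ≤ π / 2) :
    (∀ c : ℝ, 0 < c → ∃! ψ₁ : ℝ, ψ₁ ∈ Set.Ioo 0 ψ₂ ∧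
        (∫ ψ in ψ₁..ψ₂, Real.cos ψ / Real.sqrt (Real.cos ψ₁ - Real.cos ψ)) = c) ∧
    Set.BijOn
      (fun ψ₁ => ∫ ψ in ψ₁..ψ₂, Real.cos ψ / Real.sqrt (Real.cos ψ₁ - Real.cos ψ))
      (Set.Ioo 0 ψ₂) (Set.Ioi 0) ∧
    ∀ B : ℝ, 0 < B → ∃! ψ₁ : ℝ, ψ₁ ∈ Set.Ioo 0 ψ₂ ∧
      2 * Real.sqrt (2 * B) =
        ∫ ψ in ψ₁..ψ₂, Real.cos ψ / Real.sqrt (Real.cos ψ₁ - Real.cos ψ) := by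
  have h₂π : ψ₂ < π := h₂'.trans_lt (by linarith [pi_pos])
  have hcos := bijOn_cos_Ioo h₂ h₂π.le
  have hb : 0 ≤ cos ψ₂ := cos_nonneg_of_mem_Icc ⟨by linarith, h₂'⟩
  have hb₁ : cos ψ₂ < 1 := by simpa using cos_lt_cos_of_nonneg_of_le_pi le_rfl h₂π.le h₂
  have hbij : BijOn (fun ψ₁ => ∫ ψ in ψ₁..ψ₂, cos ψ / √(cos ψ₁ - cos ψ)) (Ioo 0 ψ₂) (Ioi 0) :=
    ((bijOn_jOfCos hb hb₁).comp hcos).congr fun ψ₁ hψ₁ =>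
      ((integral_cos_div_sqrt_eq hψ₁.1 hψ₁.2.le h₂π).trans
        (integral_cotArccos_div_sqrt_eq (hcos.mapsTo hψ₁).1)).symm
  refine ⟨fun c hc => hbij.existsUnique_mem_and_eq hc, hbij, fun B hB => ?_⟩
  simpa only [eq_comm] using
    hbij.existsUnique_mem_and_eq (y := 2 * √(2 * B)) (mem_Ioi.2 (by positivity))
end
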